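/- arXiv:2009.05198 — 2 statements merged into one kernel-verified Lean document; each statement's English description precedes it below -/
import Mathlib

section
/- For fixed σ̃ > 0 and Δ ≠ 0, the optimal noise σ* maximizing P satisfies σ*² = (Δ² + √(Δ⁴ + 4σ̃⁴))/2; in particular σ* > σ̃. -/
/-!
Up to a positive constant, `P = exp F` with
`F σ = (log σ - log (σ² + σ̃²)) / 2 - Δ² / (4 (σ² + σ̃²))`, and `F'(σ)` has the sign of
`σ̃⁴ + Δ² σ² - σ⁴`, a concave quadratic in `σ²` with positive root
`t₀ = (Δ² + √(Δ⁴ + 4 σ̃⁴)) / 2`. Hence `F` increases up to `√t₀` and decreases after it, so every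
maximiser equals `√t₀`. Finally `t₀ > σ̃²` since the quadratic equals `Δ² σ̃² > 0` at `σ² = σ̃²`.
-/

open Real Set

theorem eq_of_isMaxOn_of_deriv_pos_of_deriv_neg {f f' : ℝ → ℝ} {a c x : ℝ} (hac : a < c)
    (hf : ∀ y ∈ Ioi a, HasDerivAt f (f' y) y) (hpos : ∀ y ∈ Ioo a c, 0 < f' y)
    (hneg : ∀ y ∈ Ioi c, f' y < 0) (hx : x ∈ Ioi a) (hmax : IsMaxOn f (Ioi a) x) : x = c := by
  have hcont : ContinuousOn f (Ioi a) := fun y hy => (hf y hy).continuousAt.continuousWithinAt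
  have hmono : StrictMonoOn f (Ioc a c) := by
    refine strictMonoOn_of_deriv_pos (convex_Ioc a c) (hcont.mono Ioc_subset_Ioi_self) ?_
    intro y hy
    rw [interior_Ioc] at hy
    rw [(hf y hy.1).deriv]
    exact hpos y hy
  have hanti : StrictAntiOn f (Ici c) := by
    refine strictAntiOn_of_deriv_neg (convex_Ici c) (hcont.mono (Ici_subset_Ioi.mpr hac)) ?_
    intro y hy
    rw [interior_Ici] at hy
    rw [(hf y (hac.trans hy)).deriv]
    exact hneg y hy
  have hfc : f c ≤ f x := hmax (show c ∈ Ioi a from hac)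
  rcases lt_trichotomy x c with hxc | hxc | hxc
  · exact absurd hfc (not_le.mpr (hmono ⟨hx, hxc.le⟩ ⟨hac, le_rfl⟩ hxc))
  · exact hxc
  · exact absurd hfc (not_le.mpr (hanti self_mem_Ici hxc.le hxc))

noncomputable def winProb (τ Δ σ : ℝ) : ℝ :=
  √(2 * σ * τ / (σ ^ 2 + τ ^ 2)) * exp (-Δ ^ 2 / (4 * (σ ^ 2 + τ ^ 2)))

noncomputable def logWinProb (τ Δ σ : ℝ) : ℝ :=
  (log (2 * τ) + log σ - log (σ ^ 2 + τ ^ 2)) / 2 - Δ ^ 2 / (4 * (σ ^ 2 + τ ^ 2))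

theorem winProb_eq_exp_logWinProb {τ σ : ℝ} (hτ : 0 < τ) (hσ : 0 < σ) (Δ : ℝ) :
    winProb τ Δ σ = exp (logWinProb τ Δ σ) := by
  have hpos : 0 < 2 * σ * τ / (σ ^ 2 + τ ^ 2) := by positivity
  have hlog : log (2 * σ * τ / (σ ^ 2 + τ ^ 2)) = log (2 * τ) + log σ - log (σ ^ 2 + τ ^ 2) := by
    rw [log_div (by positivity) (by positivity), mul_right_comm, log_mul (by positivity) hσ.ne']
  rw [winProb, logWinProb, sub_eq_add_neg, exp_add, neg_div, ← hlog, exp_half, exp_log hpos]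

theorem hasDerivAt_logWinProb (τ Δ : ℝ) {σ : ℝ} (hσ : 0 < σ) :
    HasDerivAt (logWinProb τ Δ)
      ((τ ^ 4 + Δ ^ 2 * σ ^ 2 - σ ^ 4) / (2 * σ * (σ ^ 2 + τ ^ 2) ^ 2)) σ := by
  have hσ0 : σ ≠ 0 := hσ.ne'
  have hsum : σ ^ 2 + τ ^ 2 ≠ 0 := by positivity
  have hsq : HasDerivAt (fun y : ℝ => y ^ 2 + τ ^ 2) (2 * σ) σ := by
    simpa using (hasDerivAt_pow 2 σ).add_const (τ ^ 2)
  have h : HasDerivAt (logWinProb τ Δ) ((σ⁻¹ - (σ ^ 2 + τ ^ 2)⁻¹ * (2 * σ)) / 2 -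
      Δ ^ 2 * (-(4 * (2 * σ)) / (4 * (σ ^ 2 + τ ^ 2)) ^ 2)) σ := by
    have hrec := ((hsq.const_mul 4).inv (by positivity)).const_mul (Δ ^ 2)
    exact ((((hasDerivAt_log hσ0).const_add (log (2 * τ))).sub
      ((hasDerivAt_log hsum).comp σ hsq)).div_const 2).sub hrec
  convert h using 1
  field_simp
  ring

noncomputable def optimalVariance (τ Δ : ℝ) : ℝ :=
  (Δ ^ 2 + √(Δ ^ 4 + 4 * τ ^ 4)) / 2

theorem sq_right_lt_optimalVariance {τ : ℝ} (hτ : τ ≠ 0) (Δ : ℝ) :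
    Δ ^ 2 < optimalVariance τ Δ := by
  have hτ4 : 0 < τ ^ 4 := by positivity
  have hlt : Δ ^ 2 < √(Δ ^ 4 + 4 * τ ^ 4) := lt_sqrt_of_sq_lt (by linarith [pow_mul Δ 2 2])
  unfold optimalVariance
  linarith

theorem sq_left_lt_optimalVariance {τ Δ : ℝ} (hτ : τ ≠ 0) (hΔ : Δ ≠ 0) :
    τ ^ 2 < optimalVariance τ Δ := by
  have hτ2 := sq_pos_of_ne_zero hτ
  have hΔ2 := sq_pos_of_ne_zero hΔ
  have hlt : 2 * τ ^ 2 - Δ ^ 2 < √(Δ ^ 4 + 4 * τ ^ 4) :=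
    lt_sqrt_of_sq_lt (by nlinarith [mul_pos hτ2 hΔ2])
  unfold optimalVariance
  linarith

theorem pow_four_add_sq_mul_sub_sq_eq_mul (τ Δ t : ℝ) :
    τ ^ 4 + Δ ^ 2 * t - t ^ 2 =
      (optimalVariance τ Δ - t) * (t + (optimalVariance τ Δ - Δ ^ 2)) := by
  have hr : √(Δ ^ 4 + 4 * τ ^ 4) ^ 2 = Δ ^ 4 + 4 * τ ^ 4 := sq_sqrt (by positivity)
  unfold optimalVariance
  linear_combination (-1 / 4 : ℝ) * hr

theorem logWinProb_deriv_pos {τ Δ σ : ℝ} (hτ : τ ≠ 0) (hσ : 0 < σ)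
    (hlt : σ < √(optimalVariance τ Δ)) :
    0 < (τ ^ 4 + Δ ^ 2 * σ ^ 2 - σ ^ 4) / (2 * σ * (σ ^ 2 + τ ^ 2) ^ 2) := by
  have hσ2 : σ ^ 2 < optimalVariance τ Δ := (lt_sqrt hσ.le).1 hlt
  have hΔ2 := sq_right_lt_optimalVariance hτ Δ
  have hnum : 0 < τ ^ 4 + Δ ^ 2 * σ ^ 2 - σ ^ 4 := by
    rw [show σ ^ 4 = (σ ^ 2) ^ 2 by ring, pow_four_add_sq_mul_sub_sq_eq_mul]
    exact mul_pos (by linarith) (by nlinarith)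
  positivity

theorem logWinProb_deriv_neg {τ Δ σ : ℝ} (hτ : τ ≠ 0)
    (hlt : √(optimalVariance τ Δ) < σ) :
    (τ ^ 4 + Δ ^ 2 * σ ^ 2 - σ ^ 4) / (2 * σ * (σ ^ 2 + τ ^ 2) ^ 2) < 0 := by
  have hσ : 0 < σ := (sqrt_nonneg _).trans_lt hlt
  have hσ2 : optimalVariance τ Δ < σ ^ 2 := (sqrt_lt' hσ).1 hlt
  have hΔ2 := sq_right_lt_optimalVariance hτ Δ
  have hnum : τ ^ 4 + Δ ^ 2 * σ ^ 2 - σ ^ 4 < 0 := by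
    rw [show σ ^ 4 = (σ ^ 2) ^ 2 by ring, pow_four_add_sq_mul_sub_sq_eq_mul]
    exact mul_neg_of_neg_of_pos (by linarith) (by nlinarith)
  exact div_neg_of_neg_of_pos hnum (by positivity)

theorem winning_prob_optimal_noise (σ_tilde Δ : ℝ) (hσ : 0 < σ_tilde) (hΔ : Δ ≠ 0)
    (σstar : ℝ) (hσstar : 0 < σstar)
    (hmax : ∀ σ : ℝ, 0 < σ →
      Real.sqrt (2 * σ * σ_tilde / (σ ^ 2 + σ_tilde ^ 2)) *
          Real.exp (-Δ ^ 2 / (4 * (σ ^ 2 + σ_tilde ^ 2))) ≤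
        Real.sqrt (2 * σstar * σ_tilde / (σstar ^ 2 + σ_tilde ^ 2)) *
          Real.exp (-Δ ^ 2 / (4 * (σstar ^ 2 + σ_tilde ^ 2)))) :
    σstar ^ 2 = (Δ ^ 2 + Real.sqrt (Δ ^ 4 + 4 * σ_tilde ^ 4)) / 2 ∧ σ_tilde < σstar := by
  have hτ : σ_tilde ≠ 0 := hσ.ne'
  have ht₀ : 0 < optimalVariance σ_tilde Δ :=
    (sq_nonneg Δ).trans_lt (sq_right_lt_optimalVariance hτ Δ)
  have hmaxOn : IsMaxOn (logWinProb σ_tilde Δ) (Ioi 0) σstar := fun σ (hσ' : 0 < σ) => by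
    have h : winProb σ_tilde Δ σ ≤ winProb σ_tilde Δ σstar := hmax σ hσ'
    rwa [winProb_eq_exp_logWinProb hσ hσ', winProb_eq_exp_logWinProb hσ hσstar, exp_le_exp] at h
  have hstar : σstar = √(optimalVariance σ_tilde Δ) :=
    eq_of_isMaxOn_of_deriv_pos_of_deriv_neg (sqrt_pos.2 ht₀)
      (fun _ hy => hasDerivAt_logWinProb σ_tilde Δ hy)
      (fun _ hy => logWinProb_deriv_pos hτ hy.1 hy.2) (fun _ hy => logWinProb_deriv_neg hτ hy)
      hσstar hmaxOn
  rw [hstar, sq_sqrt ht₀.le, lt_sqrt hσ.le]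
  exact ⟨rfl, sq_left_lt_optimalVariance hτ hΔ⟩
end

section
/- Fix r > 0 and constants a = σ_T, b = σ̃ > 0. Suppose E[X₀] < μ̃ < μ (i.e. the public's stance lies strictly between the initial perceived stance and the candidate's true stance). Then there exists a unique T* > 0 such that μ(1−e^{−rT*}) + e^{−rT*}E[X₀] = μ̃, and P_T(μ) as a function of T attains its global maximum √(2ab/(a²+b²)) at T = T*. -/
/-!
The perceived stance `m(T) = μ - (μ - x₀) e^{-rT}` increases strictly from `m(0) = x₀` towards
`μ`, so it crosses any level `μ̃ ∈ (x₀, μ)` exactly once, at `T* = log ((μ - x₀) / (μ - μ̃)) / r > 0`.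
The Gaussian factor `exp (-(m T - μ̃)² / (4 (a² + b²)))` is at most `1`, with equality exactly
where `m T = μ̃`.
-/

open Real

noncomputable def relaxation (μ x₀ r t : ℝ) : ℝ := μ * (1 - exp (-r * t)) + exp (-r * t) * x₀

section Relaxation

variable {μ x₀ r : ℝ}

theorem relaxation_eq (t : ℝ) : relaxation μ x₀ r t = μ - (μ - x₀) * exp (-r * t) := by
  unfold relaxation; ring

@[simp]
theorem relaxation_zero : relaxation μ x₀ r 0 = x₀ := by
  simp [relaxation]

theorem relaxation_strictMono (hr : 0 < r) (hx : x₀ < μ) : StrictMono (relaxation μ x₀ r) := by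
  intro s t hst
  have hexp : exp (-r * t) < exp (-r * s) := exp_lt_exp.mpr (by nlinarith)
  rw [relaxation_eq, relaxation_eq]
  exact sub_lt_sub_left (mul_lt_mul_of_pos_left hexp (sub_pos.mpr hx)) μ

theorem relaxation_log_div {y : ℝ} (hr : r ≠ 0) (hx : x₀ < μ) (hy : y < μ) :
    relaxation μ x₀ r (log ((μ - x₀) / (μ - y)) / r) = y := by
  have hxμ : 0 < μ - x₀ := sub_pos.mpr hx
  have hyμ : 0 < μ - y := sub_pos.mpr hy
  have hexp : exp (-r * (log ((μ - x₀) / (μ - y)) / r)) = (μ - y) / (μ - x₀) := by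
    rw [show -r * (log ((μ - x₀) / (μ - y)) / r) = -log ((μ - x₀) / (μ - y)) by field_simp,
      exp_neg, exp_log (div_pos hxμ hyμ), inv_div]
  rw [relaxation_eq, hexp]
  field_simp
  ring

end Relaxation

theorem mul_exp_neg_sq_div_le {s k : ℝ} (hs : 0 ≤ s) (hk : 0 ≤ k) (x : ℝ) :
    s * exp (-x ^ 2 / k) ≤ s :=
  mul_le_of_le_one_right hs <|
    exp_le_one_iff.mpr <| div_nonpos_of_nonpos_of_nonneg (neg_nonpos.mpr (sq_nonneg x)) hk

theorem winning_prob_peak_time_general (r a b μ μ_tilde x₀ : ℝ)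
    (hr : 0 < r)
    (h₁ : x₀ < μ_tilde) (h₂ : μ_tilde < μ) :
    let m : ℝ → ℝ := fun t => μ * (1 - Real.exp (-r * t)) + Real.exp (-r * t) * x₀
    let P : ℝ → ℝ := fun t =>
      Real.sqrt (2 * a * b / (a ^ 2 + b ^ 2)) *
        Real.exp (-(m t - μ_tilde) ^ 2 / (4 * (a ^ 2 + b ^ 2)))
    ∃ Tstar : ℝ, 0 < Tstar ∧ m Tstar = μ_tilde ∧
      (∀ T : ℝ, 0 < T → m T = μ_tilde → T = Tstar) ∧
      P Tstar = Real.sqrt (2 * a * b / (a ^ 2 + b ^ 2)) ∧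
      ∀ T : ℝ, 0 < T → P T ≤ Real.sqrt (2 * a * b / (a ^ 2 + b ^ 2)) := by
  intro m P
  have hmono : StrictMono m := relaxation_strictMono hr (h₁.trans h₂)
  set Tstar := log ((μ - x₀) / (μ - μ_tilde)) / r
  have hcross : m Tstar = μ_tilde := relaxation_log_div hr.ne' (h₁.trans h₂) h₂
  refine ⟨Tstar, ?_, hcross, fun T _ hT => hmono.injective (hT.trans hcross.symm), ?_,
    fun T _ => mul_exp_neg_sq_div_le (sqrt_nonneg _) (by positivity) _⟩
  · refine hmono.lt_iff_lt.mp ?_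
    rw [hcross]
    exact (relaxation_zero (μ := μ) (r := r)).trans_lt h₁
  · simp [P, hcross]

theorem winning_prob_peak_time (r a b μ μ_tilde x₀ : ℝ)
    (hr : 0 < r) (ha : 0 < a) (hb : 0 < b)
    (h₁ : x₀ < μ_tilde) (h₂ : μ_tilde < μ) :
    let m : ℝ → ℝ := fun t => μ * (1 - Real.exp (-r * t)) + Real.exp (-r * t) * x₀
    let P : ℝ → ℝ := fun t =>
      Real.sqrt (2 * a * b / (a ^ 2 + b ^ 2)) *
        Real.exp (-(m t - μ_tilde) ^ 2 / (4 * (a ^ 2 + b ^ 2)))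
    ∃ Tstar : ℝ, 0 < Tstar ∧ m Tstar = μ_tilde ∧
      (∀ T : ℝ, 0 < T → m T = μ_tilde → T = Tstar) ∧
      P Tstar = Real.sqrt (2 * a * b / (a ^ 2 + b ^ 2)) ∧
      ∀ T : ℝ, 0 < T → P T ≤ Real.sqrt (2 * a * b / (a ^ 2 + b ^ 2)) :=
  winning_prob_peak_time_general r a b μ μ_tilde x₀ hr h₁ h₂
end
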